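/- arXiv:2508.14538 — 3 statements merged into one kernel-verified Lean document; each statement's English description precedes it below -/
import Mathlib

section
/- If graphs G₁ and G₂ each contain a Hamiltonian cycle, then their Cartesian (box) product G₁ □ G₂ contains a Hamiltonian cycle. -/
/-- A graph has a Hamiltonian cycle. -/
def HasHamCycle {V : Type*} [DecidableEq V] (G : SimpleGraph V) : Prop :=
  ∃ (v : V) (c : G.Walk v v), c.IsHamiltonianCycle

namespace HamAux

open SimpleGraph

lemma mapGetLast? {α β : Type*} (f : α → β) (l : List α) :
    (l.map f).getLast? = l.getLast?.map f := by
  rw [← List.head?_reverse, ← List.head?_reverse, ← List.map_reverse, List.head?_map]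

variable {V : Type*} {G : SimpleGraph V}

/-- Build a walk from `a` to `b` through the intermediate list `l`. -/
def mkWalk (G : SimpleGraph V) : (a : V) → (l : List V) → (b : V) →
    List.Chain G.Adj a (l ++ [b]) → G.Walk a b
  | _, [], _, h => Walk.cons (List.chain_cons.mp h).1 Walk.nil
  | _, c :: l, b, h => Walk.cons (List.chain_cons.mp h).1
      (mkWalk G c l b (List.chain_cons.mp h).2)

lemma mkWalk_support (G : SimpleGraph V) : ∀ (a : V) (l : List V) (b : V)
    (h : List.Chain G.Adj a (l ++ [b])), (mkWalk G a l b h).support = a :: (l ++ [b])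
  | _, [], _, _ => rfl
  | a, c :: l, b, h => by
      simp [mkWalk, mkWalk_support G c l b]
      exact mkWalk_support G c l b _

lemma mkWalk_edge_start (G : SimpleGraph V) : ∀ (a : V) (l : List V) (b : V)
    (h : List.Chain G.Adj a (l ++ [b])) (_ : a ∉ l ++ [b]) (e : Sym2 V)
    (_ : e ∈ (mkWalk G a l b h).edges) (_ : a ∈ e),
    e = s(a, (l ++ [b]).head (by simp))
  | a, [], b, h, ha, e, he, hae => by
      simp [mkWalk] at he; simp [he]
  | a, c :: l, b, h, ha, e, he, hae => by
      simp only [mkWalk, Walk.edges_cons, List.mem_cons] at he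
      rcases he with rfl | he
      · rfl
      · exfalso
        obtain ⟨y, rfl⟩ := Sym2.mem_iff_exists.mp hae
        have hsup : a ∈ (mkWalk G c l b (List.chain_cons.mp h).2).support :=
          Walk.fst_mem_support_of_mem_edges _ he
        rw [mkWalk_support G c l b (List.chain_cons.mp h).2] at hsup
        simp only [List.cons_append, List.mem_cons, List.mem_append,
          List.mem_singleton] at hsup ha
        tauto

/-- A "cyclic list" description yields a Hamiltonian cycle. -/
theorem hasHamCycle_of_cycList [DecidableEq V] (a : V) (l : List V) (b : V)
    (hl : l ≠ []) (hnd : (a :: (l ++ [b])).Nodup) (hcmp : ∀ x, x ∈ a :: (l ++ [b]))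
    (hch : List.Chain G.Adj a (l ++ [b])) (hba : G.Adj b a) : HasHamCycle G := by
  classical
  have hpath : (mkWalk G a l b hch).IsPath := by
    rw [SimpleGraph.Walk.isPath_def, mkWalk_support]; exact hnd
  have hnd' := List.nodup_cons.mp hnd
  have hbl : b ∉ l := by
    intro hb
    have hD := (List.nodup_append'.mp hnd'.2).2.2
    exact hD hb (List.mem_singleton_self b)
  have hanotmem : a ∉ l ++ [b] := hnd'.1
  have hedge : s(b, a) ∉ (mkWalk G a l b hch).edges := by
    intro hmem
    have haeq := mkWalk_edge_start G a l b hch hanotmem s(b, a) hmem (by simp)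
    have hhead : (l ++ [b]).head (by simp) = l.head hl := by
      cases l with
      | nil => exact absurd rfl hl
      | cons c l => rfl
    rw [hhead] at haeq
    have hbh : b = l.head hl := by
      rw [Sym2.eq_iff] at haeq
      rcases haeq with ⟨h1, h2⟩ | ⟨h1, h2⟩
      · exact h1.trans h2  -- b = a, a = head
      · exact h1
    exact hbl (hbh ▸ List.head_mem hl)
  have hcyc : (Walk.cons hba (mkWalk G a l b hch)).IsCycle :=
    SimpleGraph.Path.cons_isCycle ⟨mkWalk G a l b hch, hpath⟩ hba hedge
  refine ⟨b, Walk.cons hba (mkWalk G a l b hch), ?_⟩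
  rw [SimpleGraph.Walk.isHamiltonianCycle_iff_isCycle_and_support_count_tail_eq_one]
  refine ⟨hcyc, fun x => ?_⟩
  have hsup : (Walk.cons hba (mkWalk G a l b hch)).support
      = b :: (a :: (l ++ [b])) := by
    rw [Walk.support_cons, mkWalk_support]
  rw [hsup, List.tail_cons]
  exact List.count_eq_one_of_mem hnd (hcmp x)

/-- A closed chain list description yields a Hamiltonian cycle. -/
theorem hasHamCycle_of_list [DecidableEq V] (S : List V) (h3 : 3 ≤ S.length)
    (hnd : S.Nodup) (hcmp : ∀ x, x ∈ S) (hch : S.Chain' G.Adj)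
    (hwrap : ∀ x ∈ S.getLast?, ∀ y ∈ S.head?, G.Adj x y) : HasHamCycle G := by
  classical
  cases S with
  | nil => simp at h3
  | cons a t =>
    have htne : t ≠ [] := by
      intro h0; rw [h0] at h3; simp at h3
    have hsplit : t.dropLast ++ [t.getLast htne] = t := List.dropLast_append_getLast htne
    set b := t.getLast htne with hb
    set l := t.dropLast with hldef
    have hlne : l ≠ [] := by
      intro h0
      have h1 : t.length = 1 := by rw [← hsplit, h0]; simp
      simp only [List.length_cons] at h3
      omega
    have hchain : List.Chain G.Adj a (l ++ [b]) := by
      rw [hsplit]; exact hch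
    have hadj : G.Adj b a := by
      apply hwrap
      · rw [List.getLast?_eq_getLast (by simp : (a :: t) ≠ []),
          List.getLast_cons htne]
        exact rfl
      · rfl
    refine hasHamCycle_of_cycList a l b hlne ?_ ?_ hchain hadj
    · rw [hsplit]; exact hnd
    · intro x; rw [hsplit]; exact hcmp x

/-- Extract a cyclic list from a Hamiltonian cycle. -/
theorem cycList_of_hasHamCycle [DecidableEq V] (h : HasHamCycle G) :
    ∃ (a : V) (l : List V) (b : V), l ≠ [] ∧ (a :: (l ++ [b])).Nodup ∧
      (∀ x, x ∈ a :: (l ++ [b])) ∧ List.Chain G.Adj a (l ++ [b]) ∧ G.Adj b a := by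
  classical
  obtain ⟨v, c, hc⟩ := h
  have hcount := (SimpleGraph.Walk.isHamiltonianCycle_iff_isCycle_and_support_count_tail_eq_one.mp hc).2
  have hcyc := hc.isCycle
  have h3 := hcyc.three_le_length
  set T := c.support.tail with hT
  have hTnd : T.Nodup := List.nodup_iff_count_le_one.mpr fun x => (hcount x).le
  have hsup : c.support = v :: T := c.support_eq_cons
  have hTlen : T.length = c.length := by
    have hlen : c.support.length = c.length + 1 := c.length_support
    rw [hsup] at hlen
    simpa using hlen
  have hTne : T ≠ [] := by
    intro h0; rw [h0] at hTlen; simp at hTlen; omega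
  have h1 : c.support.getLast? = some v := by
    rw [List.getLast?_eq_getLast c.support_ne_nil]
    exact congrArg some c.getLast_support
  rw [hsup] at h1
  have hTlast : T.getLast hTne = v := by
    rw [List.getLast?_eq_getLast (by simp : (v :: T) ≠ []),
      List.getLast_cons hTne] at h1
    exact Option.some.inj h1
  set T' := T.dropLast with hT'
  have hTsplit : T' ++ [v] = T := by
    rw [hT', ← hTlast]; exact List.dropLast_append_getLast hTne
  have hT'len : 2 ≤ T'.length := by
    have : T'.length = T.length - 1 := by rw [hT', List.length_dropLast]
    omega
  have hT'ne : T' ≠ [] := by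
    intro h0; rw [h0] at hT'len; simp at hT'len
  set b := T'.getLast hT'ne with hb
  set l := T'.dropLast with hlq
  have hlsplit : l ++ [b] = T' := List.dropLast_append_getLast hT'ne
  have hlne : l ≠ [] := by
    intro h0
    have : T'.length = 1 := by rw [← hlsplit, h0]; simp
    omega
  refine ⟨v, l, b, hlne, ?_, ?_, ?_, ?_⟩
  · -- Nodup of v :: T'
    rw [hlsplit]
    have hvT' : v ∉ T' := by
      intro hv
      have hc1 : T.count v = 1 := hcount v
      rw [← hTsplit, List.count_append] at hc1
      have hc2 : 0 < T'.count v := List.count_pos_iff.mpr hv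
      simp at hc1
      omega
    refine List.nodup_cons.mpr ⟨hvT', ?_⟩
    have hnd2 := hTnd
    rw [← hTsplit] at hnd2
    exact (List.nodup_append.mp hnd2).1
  · -- completeness
    intro x
    rw [hlsplit]
    have hx : x ∈ c.support := hc.mem_support x
    rw [hsup, ← hTsplit] at hx
    simp only [List.mem_cons, List.mem_append, List.mem_singleton] at hx ⊢
    tauto
  · -- chain
    rw [hlsplit]
    have hchn : List.Chain' G.Adj c.support := c.isChain_adj_support
    rw [hsup, ← hTsplit, ← List.cons_append] at hchn
    exact (List.isChain_append.mp hchn).1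
  · -- wrap adjacency
    have hchn : List.Chain' G.Adj c.support := c.isChain_adj_support
    rw [hsup, ← hTsplit, ← List.cons_append] at hchn
    have hj := (List.isChain_append.mp hchn).2.2
    have hgl : (v :: T').getLast? = some b := by
      rw [List.getLast?_eq_getLast (by simp : (v :: T') ≠ []),
        List.getLast_cons hT'ne]
    exact hj b (by rw [hgl]; rfl) v rfl

section Snake

variable {V₁ V₂ : Type*} {G₁ : SimpleGraph V₁} {G₂ : SimpleGraph V₂}

/-- Serpentine list over rows `R` and columns `K`, alternating direction. -/
def snakeL (K : List V₂) : Bool → List V₁ → List (V₁ × V₂)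
  | _, [] => []
  | d, r :: rest => ((if d then K else K.reverse).map (fun y => (r, y))) ++ snakeL K (!d) rest

lemma mem_snakeL (K : List V₂) : ∀ (d : Bool) (R : List V₁) (x : V₁) (y : V₂),
    (x, y) ∈ snakeL K d R ↔ x ∈ R ∧ y ∈ K
  | _, [], x, y => by simp [snakeL]
  | d, r :: rest, x, y => by
      simp only [snakeL, List.mem_append, List.mem_map, List.mem_cons,
        mem_snakeL K (!d) rest x y, Prod.mk.injEq]
      cases d <;> simp <;> aesop

lemma snakeL_ne_nil (K : List V₂) (hK : K ≠ []) (d : Bool) (r : V₁) (rest : List V₁) :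
    snakeL K d (r :: rest) ≠ [] := by
  simp only [snakeL]
  intro h0
  rcases List.append_eq_nil_iff.mp h0 with ⟨h1, _⟩
  cases d <;> simp_all

lemma nodup_snakeL (K : List V₂) (hK : K.Nodup) : ∀ (d : Bool) (R : List V₁),
    R.Nodup → (snakeL K d R).Nodup
  | _, [], _ => by simp [snakeL]
  | d, r :: rest, hR => by
      simp only [snakeL]
      rw [List.nodup_append']
      refine ⟨?_, nodup_snakeL K hK (!d) rest (List.nodup_cons.mp hR).2, ?_⟩
      · refine List.Nodup.map ?_ (by cases d <;> simp [hK])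
        intro y y' hyy; simpa using hyy
      · intro p hp hp'
        obtain ⟨y, hy, rfl⟩ := List.mem_map.mp hp
        have := (mem_snakeL K (!d) rest r y).mp hp'
        exact (List.nodup_cons.mp hR).1 this.1

lemma head?_snakeL (K : List V₂) (hK : K ≠ []) (d : Bool) (r : V₁) (rest : List V₁) :
    (snakeL K d (r :: rest)).head?
      = ((if d then K else K.reverse).head?).map (fun y => (r, y)) := by
  simp only [snakeL]
  rw [List.head?_append_of_ne_nil _ (by cases d <;> simp [hK]), List.head?_map]

lemma getLast?_snakeL (K : List V₂) (hK : K ≠ []) : ∀ (d : Bool) (R : List V₁) (hR : R ≠ []),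
    ∃ (rr : V₁) (cc : V₂), (snakeL K d R).getLast? = some (rr, cc) ∧
      R.getLast? = some rr ∧ (K.getLast? = some cc ∨ K.head? = some cc)
  | d, [], hR => absurd rfl hR
  | d, [r], _ => by
      cases d
      · refine ⟨r, K.head hK, ?_, rfl, Or.inr (List.head?_eq_head hK)⟩
        simp only [snakeL, Bool.false_eq_true, if_false, List.append_nil]
        rw [mapGetLast?, List.getLast?_reverse, List.head?_eq_head hK]
        rfl
      · refine ⟨r, K.getLast hK, ?_, rfl, Or.inl (List.getLast?_eq_getLast hK)⟩
        simp only [snakeL, if_true, List.append_nil]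
        rw [mapGetLast?, List.getLast?_eq_getLast hK]
        rfl
  | d, r :: r' :: rest, _ => by
      obtain ⟨rr, cc, h1, h2, h3⟩ := getLast?_snakeL K hK (!d) (r' :: rest) (by simp)
      refine ⟨rr, cc, ?_, ?_, h3⟩
      · rw [show snakeL K d (r :: r' :: rest)
            = ((if d then K else K.reverse).map (fun y => (r, y))) ++ snakeL K (!d) (r' :: rest)
            from rfl]
        rw [List.getLast?_append_of_ne_nil _ (snakeL_ne_nil K hK (!d) r' rest)]
        exact h1
      · rw [List.getLast?_cons_cons]; exact h2

lemma chain'_snakeL (K : List V₂) (hK : K ≠ []) (hKc : List.Chain' G₂.Adj K) :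
    ∀ (d : Bool) (R : List V₁), List.Chain' G₁.Adj R →
    List.Chain' (G₁.boxProd G₂).Adj (snakeL K d R)
  | _, [], _ => by simp [snakeL, List.Chain']
  | d, r :: rest, hRc => by
      have hKrev : List.Chain' G₂.Adj K.reverse :=
        List.isChain_reverse.mpr (List.IsChain.imp (fun a b hab => hab.symm) hKc)
      simp only [snakeL]
      unfold List.Chain'
      rw [List.isChain_append]
      refine ⟨?_, chain'_snakeL K hK hKc (!d) rest (List.IsChain.tail hRc), ?_⟩
      · rw [List.isChain_map]
        have hrow : List.Chain' G₂.Adj (if d then K else K.reverse) := by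
          cases d
          · simpa using hKrev
          · simpa using hKc
        refine List.IsChain.imp ?_ hrow
        intro y y' hyy
        exact SimpleGraph.boxProd_adj.mpr (Or.inr ⟨hyy, rfl⟩)
      · intro p hp q hq
        cases rest with
        | nil => simp [snakeL] at hq
        | cons r' rest' =>
          have hadj : G₁.Adj r r' := (List.isChain_cons_cons.mp hRc).1
          have hcol : (if (!d) then K else K.reverse).head? = (if d then K else K.reverse).getLast? := by
            cases d
            · simp [← List.head?_reverse]
            · simp [List.head?_reverse]
          rw [mapGetLast?, Option.mem_def, Option.map_eq_some_iff] at hp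
          obtain ⟨y, hy, rfl⟩ := hp
          rw [head?_snakeL K hK (!d) r' rest', hcol, Option.mem_def, Option.map_eq_some_iff] at hq
          obtain ⟨y', hy', rfl⟩ := hq
          have hyy : y = y' := by rw [hy] at hy'; exact Option.some.inj hy'
          subst hyy
          exact SimpleGraph.boxProd_adj.mpr (Or.inl ⟨hadj, rfl⟩)

end Snake

end HamAux

/-- If `G₁` and `G₂` each contain a Hamiltonian cycle, then their Cartesian (box)
product `G₁ □ G₂` contains a Hamiltonian cycle. -/
theorem stmt0 {V₁ V₂ : Type*} [Fintype V₁] [Fintype V₂] [DecidableEq V₁] [DecidableEq V₂]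
    (G₁ : SimpleGraph V₁) (G₂ : SimpleGraph V₂)
    (h₁card : 3 ≤ Fintype.card V₁) (h₂card : 3 ≤ Fintype.card V₂)
    (h₁ : HasHamCycle G₁) (h₂ : HasHamCycle G₂) :
    HasHamCycle (G₁.boxProd G₂) := by
  classical
  obtain ⟨a₁, l₁, b₁, hl₁ne, hnd₁, hcmp₁, hch₁, hba₁⟩ := HamAux.cycList_of_hasHamCycle h₁
  obtain ⟨a₂, l₂, b₂, hl₂ne, hnd₂, hcmp₂, hch₂, hba₂⟩ := HamAux.cycList_of_hasHamCycle h₂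
  set K : List V₂ := a₂ :: l₂ with hKdef
  set R : List V₁ := a₁ :: (l₁ ++ [b₁]) with hRdef
  have hKne : K ≠ [] := by simp [hKdef]
  have hRne : R ≠ [] := by simp [hRdef]
  -- basic facts about K and b₂
  have hnd₂' : ((a₂ :: l₂) ++ [b₂]).Nodup := by simpa using hnd₂
  have hKnd : K.Nodup := (List.nodup_append.mp hnd₂').1
  have hzK : b₂ ∉ K := by
    intro hz
    exact (List.nodup_append'.mp hnd₂').2.2 hz (List.mem_singleton_self b₂)
  have hC₂ : List.Chain' G₂.Adj ((a₂ :: l₂) ++ [b₂]) := by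
    rw [List.cons_append]; exact hch₂
  have hKch : List.Chain' G₂.Adj K := (List.isChain_append.mp hC₂).1
  have hKlast : ∀ cc, K.getLast? = some cc → G₂.Adj cc b₂ := by
    intro cc hcc
    exact (List.isChain_append.mp hC₂).2.2 cc (by rw [hcc]; rfl) b₂ rfl
  -- basic facts about R
  have hRnd : R.Nodup := hnd₁
  have hRch : List.Chain' G₁.Adj R := hch₁
  -- the full serpentine list
  set B : List (V₁ × V₂) := R.reverse.map (fun x => (x, b₂)) with hBdef
  set S : List (V₁ × V₂) := HamAux.snakeL K true R ++ B with hSdef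
  have hBne : B ≠ [] := by simp [hBdef, hRne]
  apply HamAux.hasHamCycle_of_list S
  · -- length
    have : R.length ≤ S.length := by
      simp [hSdef, hBdef, List.length_append]
    have hRlen : 3 ≤ R.length := by
      have : 1 ≤ l₁.length := List.length_pos_iff.mpr hl₁ne
      simp [hRdef]; omega
    omega
  · -- Nodup
    rw [hSdef, List.nodup_append']
    refine ⟨HamAux.nodup_snakeL K hKnd true R hRnd, ?_, ?_⟩
    · refine List.Nodup.map ?_ (List.nodup_reverse.mpr hRnd)
      intro x x' hxx; simpa using hxx
    · intro p hp hp'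
      obtain ⟨x, y⟩ := p
      have h1 := ((HamAux.mem_snakeL K true R x y).mp hp).2
      obtain ⟨x', _, hx'⟩ := List.mem_map.mp hp'
      have : y = b₂ := by
        have := hx'; simp at this; exact this.2.symm ▸ rfl
      exact hzK (this ▸ h1)
  · -- completeness
    rintro ⟨x, y⟩
    have hx : x ∈ R := hcmp₁ x
    have hy : y ∈ (a₂ :: l₂) ++ [b₂] := by simpa using hcmp₂ y
    rw [hSdef, List.mem_append]
    rcases List.mem_append.mp hy with hyK | hyz
    · left; exact (HamAux.mem_snakeL K true R x y).mpr ⟨hx, hyK⟩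
    · right
      have : y = b₂ := List.mem_singleton.mp hyz
      subst this
      exact List.mem_map.mpr ⟨x, List.mem_reverse.mpr hx, rfl⟩
  · -- chain
    rw [hSdef]
    unfold List.Chain'
    rw [List.isChain_append]
    refine ⟨HamAux.chain'_snakeL K hKne hKch true R hRch, ?_, ?_⟩
    · rw [hBdef, List.isChain_map]
      have : List.Chain' G₁.Adj R.reverse :=
        List.isChain_reverse.mpr (List.IsChain.imp (fun a b hab => hab.symm) hRch)
      refine List.IsChain.imp ?_ this
      intro x x' hxx
      exact SimpleGraph.boxProd_adj.mpr (Or.inl ⟨hxx, rfl⟩)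
    · intro p hp q hq
      obtain ⟨rr, cc, hgl, hrl, hcol⟩ := HamAux.getLast?_snakeL K hKne true R hRne
      rw [hgl] at hp
      have hp' : (rr, cc) = p := by simpa using hp
      have hqhead : B.head? = some (rr, b₂) := by
        rw [hBdef, List.head?_map, List.head?_reverse, hrl]
        rfl
      rw [hqhead] at hq
      have hq' : (rr, b₂) = q := by simpa using hq
      rw [← hp', ← hq']
      refine SimpleGraph.boxProd_adj.mpr (Or.inr ⟨?_, rfl⟩)
      rcases hcol with hcc | hcc
      · exact hKlast cc hcc
      · have : cc = a₂ := by
          rw [hKdef] at hcc; simpa using hcc.symm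
        subst this
        exact hba₂.symm
  · -- wrap
    intro p hp q hq
    have hlastS : S.getLast? = some (a₁, b₂) := by
      rw [hSdef, List.getLast?_append_of_ne_nil _ hBne, hBdef, HamAux.mapGetLast?,
        List.getLast?_reverse]
      simp [hRdef]
    have hheadS : S.head? = some (a₁, a₂) := by
      rw [hSdef, List.head?_append_of_ne_nil _ (HamAux.snakeL_ne_nil K hKne true a₁ (l₁ ++ [b₁])),
        HamAux.head?_snakeL K hKne true a₁ (l₁ ++ [b₁])]
      simp [hKdef]
    rw [hlastS] at hp
    rw [hheadS] at hq
    have hp' : (a₁, b₂) = p := by simpa using hp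
    have hq' : (a₁, a₂) = q := by simpa using hq
    rw [← hp', ← hq']
    exact SimpleGraph.boxProd_adj.mpr (Or.inr ⟨hba₂, rfl⟩)
end

section
/- The graph on the symmetric group S_n whose edges connect permutations differing by an adjacent transposition (i.e., σ and σ ∘ (i, i+1) for some 1 ≤ i ≤ n−1) contains a Hamiltonian cycle for every n ≥ 3. -/
/-- The graph on the symmetric group `S_n` where two permutations are adjacent iff
they differ by right multiplication with an adjacent transposition `(i, i+1)`. -/
def adjTransGraph (n : ℕ) : SimpleGraph (Equiv.Perm (Fin n)) :=
  SimpleGraph.fromRel (fun σ τ => ∃ (i : ℕ) (h : i + 1 < n),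
    τ = σ * Equiv.swap ⟨i, by omega⟩ ⟨i + 1, h⟩)

open SimpleGraph

variable {V : Type*} [DecidableEq V] {G : SimpleGraph V}

/-- Build a walk from `a` to `b` through the intermediate list `l`. -/
def mkWalk (G : SimpleGraph V) (b : V) : (a : V) → (l : List V) → List.Chain G.Adj a (l ++ [b]) → G.Walk a b
  | a, [], h => Walk.cons ((List.chain_cons.mp h).1) Walk.nil
  | a, c :: l, h => Walk.cons ((List.chain_cons.mp h).1) (mkWalk G b c l (List.chain_cons.mp h).2)

lemma mkWalk_support (G : SimpleGraph V) (b a : V) (l : List V) (h) :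
    (mkWalk G b a l h).support = a :: (l ++ [b]) := by
  induction l generalizing a with
  | nil => simp [mkWalk]
  | cons c l ih => simp [mkWalk, ih]; exact ih _ _

lemma hasHamCycle_of_list [Fintype V] (a c d : V) (t : List V)
    (hnd : (a :: c :: d :: t).Nodup) (hmem : ∀ v, v ∈ (a :: c :: d :: t))
    (hch : List.Chain G.Adj a (c :: d :: t ++ [a])) : HasHamCycle G := by
  classical
  have hch' := (List.chain_cons.mp hch).2
  set p : G.Walk c a := mkWalk G a c (d :: t) hch' with hp
  have hsupp : p.support = c :: (d :: t ++ [a]) := mkWalk_support ..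
  have hpnodup : p.support.Nodup := by
    rw [hsupp]
    simp only [List.nodup_cons, List.mem_cons, List.mem_append, List.mem_singleton,
      List.nodup_append, List.nodup_singleton, List.disjoint_singleton] at hnd ⊢
    grind
  have hpath : p.IsPath := Walk.IsPath.mk' hpnodup
  have hadj : G.Adj a c := (List.chain_cons.mp hch).1
  have hedge : s(a, c) ∉ p.edges := by
    intro he
    have hpc : p = Walk.cons ((List.chain_cons.mp hch').1)
        (mkWalk G a d t (List.chain_cons.mp hch').2) := rfl
    rw [hpc, Walk.edges_cons, List.mem_cons] at he
    simp only [List.nodup_cons, List.mem_cons] at hnd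
    rcases he with he | he
    · rw [Sym2.eq_iff] at he
      tauto
    · have := Walk.snd_mem_support_of_mem_edges _ he
      erw [mkWalk_support] at this
      simp only [List.mem_cons, List.mem_append, List.mem_singleton] at this
      tauto
  have hcyc : (Walk.cons hadj p).IsCycle := (Walk.cons_isCycle_iff p hadj).mpr ⟨hpath, hedge⟩
  refine ⟨a, Walk.cons hadj p, hcyc, ?_⟩
  intro v
  have hnil := hcyc.not_nil
  have hts : (Walk.cons hadj p).tail.support = (Walk.cons hadj p).support.tail :=
    Walk.support_tail_of_not_nil _ hnil
  rw [hts]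
  have : (Walk.cons hadj p).support.tail = p.support := by simp
  rw [this, hsupp]
  refine List.count_eq_one_of_mem ?_ ?_
  · exact hsupp ▸ hpnodup
  · have := hmem v
    simp at this ⊢
    tauto

section Perms
open Equiv

/-- The adjacent transposition `(i, i+1)` in `S_M`. -/
def sw (M i : ℕ) (h : i + 1 < M) : Equiv.Perm (Fin M) :=
  Equiv.swap ⟨i, by omega⟩ ⟨i + 1, h⟩

/-- `τ` is obtained from `σ` by an adjacent transposition on the right. -/
def rel (M : ℕ) (σ τ : Equiv.Perm (Fin M)) : Prop :=
  ∃ (i : ℕ) (h : i + 1 < M), τ = σ * sw M i h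

lemma sw_ne_one (M i : ℕ) (h : i + 1 < M) : sw M i h ≠ 1 := by
  intro hs
  have := congrArg (fun f => f ⟨i, by omega⟩) hs
  simp only [sw, Equiv.swap_apply_left, Equiv.Perm.coe_one, id_eq] at this
  exact absurd (congrArg Fin.val this) (by simp)

lemma rel_symm {M : ℕ} {σ τ : Equiv.Perm (Fin M)} (h : rel M σ τ) : rel M τ σ := by
  obtain ⟨i, hi, rfl⟩ := h
  exact ⟨i, hi, by rw [mul_assoc, sw, Equiv.swap_mul_self, mul_one]⟩

lemma rel_ne {M : ℕ} {σ τ : Equiv.Perm (Fin M)} (h : rel M σ τ) : σ ≠ τ := by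
  obtain ⟨i, hi, rfl⟩ := h
  intro hc
  have : σ * 1 = σ * sw M i hi := by rwa [mul_one]
  exact sw_ne_one M i hi (mul_left_cancel this).symm

section Stair

/-- The "staircase" permutation `s_{M-1} ⋯ s_{k+1} s_k` of `Fin (M+1)`,
sending `k ↦ M` and `j ↦ j - 1` for `k < j ≤ M`, fixing `j < k`. -/
def stair (M : ℕ) (k : ℕ) : Equiv.Perm (Fin (M + 1)) :=
  if h : k < M then
    stair M (k + 1) * Equiv.swap (⟨k, by omega⟩ : Fin (M + 1)) ⟨k + 1, by omega⟩
  else 1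
termination_by M - k

lemma stair_of_lt {M k : ℕ} (h : k < M) :
    stair M k = stair M (k + 1) * Equiv.swap (⟨k, by omega⟩ : Fin (M + 1)) ⟨k + 1, by omega⟩ := by
  rw [stair, dif_pos h]

lemma stair_of_ge {M k : ℕ} (h : M ≤ k) : stair M k = 1 := by
  rw [stair, dif_neg (by omega)]

lemma stair_eq_sw {M k : ℕ} (h : k < M) :
    stair M k = stair M (k + 1) * sw (M + 1) k (by omega) := stair_of_lt h

lemma stair_apply (M : ℕ) : ∀ (k : ℕ), k ≤ M → ∀ (j : Fin (M + 1)),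
    stair M k j = if j.val < k then j else if j.val = k then Fin.last M
      else ⟨j.val - 1, by omega⟩ := by
  suffices key : ∀ (n k : ℕ), k ≤ M → M - k = n → ∀ (j : Fin (M + 1)),
      stair M k j = if j.val < k then j else if j.val = k then Fin.last M
        else ⟨j.val - 1, by omega⟩ by
    intro k hk j; exact key (M - k) k hk rfl j
  intro n
  induction n with
  | zero =>
    intro k hk hn j
    have hjlt := j.isLt
    rw [stair_of_ge (by omega)]
    rcases Nat.lt_or_ge j.val k with hj | hj
    · rw [if_pos hj]; rfl
    · have hjv : j.val = k := by omega
      rw [if_neg (by omega), if_pos hjv]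
      apply Fin.ext
      simp only [Fin.val_last, Equiv.Perm.one_apply]
      omega
  | succ n ih =>
    intro k hk hn j
    have hkM : k < M := by omega
    rw [stair_of_lt hkM]
    have ihk := ih (k + 1) (by omega) (by omega)
    simp only [Equiv.Perm.mul_apply]
    rcases Nat.lt_trichotomy j.val k with hj | hj | hj
    · have h1 : Equiv.swap (⟨k, by omega⟩ : Fin (M+1)) ⟨k+1, by omega⟩ j = j := by
        apply Equiv.swap_apply_of_ne_of_ne <;>
          (intro hc; apply absurd (congrArg Fin.val hc); simp; omega)
      rw [h1, ihk j]
      simp only [if_pos hj, if_pos (by omega : j.val < k + 1)]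
    · have hjk : j = (⟨k, by omega⟩ : Fin (M+1)) := by apply Fin.ext; simpa using hj
      rw [hjk, Equiv.swap_apply_left, ihk]
      simp
    · rcases Nat.eq_or_lt_of_le hj with hj1 | hj1
      · have hjk : j = (⟨k+1, by omega⟩ : Fin (M+1)) := by apply Fin.ext; simpa using hj1.symm
        rw [hjk, Equiv.swap_apply_right, ihk]
        simp
      · have h1 : Equiv.swap (⟨k, by omega⟩ : Fin (M+1)) ⟨k+1, by omega⟩ j = j := by
          apply Equiv.swap_apply_of_ne_of_ne <;>
            (intro hc; apply absurd (congrArg Fin.val hc); simp; omega)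
        rw [h1, ihk j]
        rw [if_neg (by omega), if_neg (by omega), if_neg (by omega), if_neg (by omega)]

lemma stair_apply_self (M k : ℕ) (hk : k ≤ M) :
    stair M k ⟨k, by omega⟩ = Fin.last M := by
  rw [stair_apply M k hk]
  simp

lemma stair_inv_last (M k : ℕ) (hk : k ≤ M) :
    (stair M k)⁻¹ (Fin.last M) = ⟨k, by omega⟩ := by
  rw [Equiv.Perm.inv_eq_iff_eq, eq_comm]
  exact stair_apply_self M k hk

/-- Conjugation: `s_i * stair M 0 = stair M 0 * s_{i+1}`. -/
lemma sw_mul_stair (M i : ℕ) (h : i + 1 < M) :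
    sw (M+1) i (by omega) * stair M 0 = stair M 0 * sw (M+1) (i+1) (by omega) := by
  ext x
  have hx := x.isLt
  simp only [Equiv.Perm.mul_apply, sw, Equiv.swap_apply_def,
    stair_apply M 0 (by omega)]
  simp only [Fin.ext_iff, Fin.val_last]
  split_ifs <;> simp_all <;> simp only [Fin.ext_iff, Fin.val_zero] at * <;> omega

section Iota
variable {M : ℕ}

/-- The inclusion `S_M → S_{M+1}` fixing the last point. -/
noncomputable def iota : Equiv.Perm (Fin M) →* Equiv.Perm (Fin (M + 1)) :=
  Equiv.Perm.viaEmbeddingHom (Fin.castSuccEmb)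

lemma iota_apply_castSucc (σ : Equiv.Perm (Fin M)) (j : Fin M) :
    iota σ (Fin.castSucc j) = Fin.castSucc (σ j) :=
  Equiv.Perm.viaEmbedding_apply σ Fin.castSuccEmb j

lemma iota_apply_last (σ : Equiv.Perm (Fin M)) :
    iota σ (Fin.last M) = Fin.last M := by
  apply Equiv.Perm.viaEmbedding_apply_of_notMem
  rintro ⟨y, hy⟩
  exact absurd (hy : Fin.castSucc y = Fin.last M) (Fin.castSucc_lt_last y).ne

lemma iota_injective : Function.Injective (iota (M := M)) :=
  Equiv.Perm.viaEmbeddingHom_injective _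

lemma iota_sw (i : ℕ) (h : i + 1 < M) :
    iota (sw M i h) = sw (M+1) i (by omega) := by
  ext x
  rcases eq_or_ne x (Fin.last M) with rfl | hx
  · rw [iota_apply_last]
    rw [sw, Equiv.swap_apply_of_ne_of_ne] <;>
      · intro hc
        have := congrArg Fin.val hc
        simp [Fin.val_last] at this
        omega
  · obtain ⟨y, rfl⟩ := Fin.exists_castSucc_eq.mpr hx
    rw [iota_apply_castSucc, sw, sw,
      show (⟨i, by omega⟩ : Fin (M+1)) = Fin.castSucc ⟨i, by omega⟩ by apply Fin.ext; rfl,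
      show (⟨i+1, by omega⟩ : Fin (M+1)) = Fin.castSucc ⟨i+1, h⟩ by apply Fin.ext; rfl,
      Function.Injective.swap_apply (Fin.castSucc_injective M)]

end Iota

/-- Insert the value `M` at position `k` in the one-line notation of `σ`. -/
noncomputable def ins {M : ℕ} (σ : Equiv.Perm (Fin M)) (k : ℕ) : Equiv.Perm (Fin (M + 1)) :=
  iota σ * stair M k

lemma rel_ins_succ {M : ℕ} (σ : Equiv.Perm (Fin M)) (k : ℕ) (hk : k < M) :
    rel (M+1) (ins σ (k+1)) (ins σ k) :=
  ⟨k, by omega, by rw [ins, ins, stair_eq_sw hk, mul_assoc]⟩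

lemma rel_ins_zero {M : ℕ} {σ τ : Equiv.Perm (Fin M)} (h : rel M σ τ) :
    rel (M+1) (ins σ 0) (ins τ 0) := by
  obtain ⟨i, hi, rfl⟩ := h
  refine ⟨i + 1, by omega, ?_⟩
  rw [ins, ins, map_mul, iota_sw, mul_assoc, sw_mul_stair M i hi, ← mul_assoc]

lemma rel_ins_top {M : ℕ} {σ τ : Equiv.Perm (Fin M)} (h : rel M σ τ) :
    rel (M+1) (ins σ M) (ins τ M) := by
  obtain ⟨i, hi, rfl⟩ := h
  refine ⟨i, by omega, ?_⟩
  rw [ins, ins, map_mul, iota_sw, mul_assoc, mul_assoc, stair_of_ge le_rfl, mul_one, one_mul]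

lemma ins_inj {M : ℕ} {σ τ : Equiv.Perm (Fin M)} {k k' : ℕ} (hk : k ≤ M) (hk' : k' ≤ M)
    (h : ins σ k = ins τ k') : σ = τ ∧ k = k' := by
  have hlast : ∀ (ρ : Equiv.Perm (Fin M)) (m : ℕ), m ≤ M → ((ins ρ m)⁻¹ (Fin.last M)).val = m := by
    intro ρ m hm
    rw [ins, mul_inv_rev, Equiv.Perm.mul_apply, ← map_inv]
    rw [show ((iota ρ⁻¹) (Fin.last M)) = Fin.last M from iota_apply_last _]
    rw [stair_inv_last M m hm]
  have hkk : k = k' := by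
    have h1 := hlast σ k hk
    have h2 := hlast τ k' hk'
    rw [h] at h1
    omega
  subst hkk
  refine ⟨?_, rfl⟩
  apply iota_injective
  exact mul_right_cancel (h : iota σ * stair M k = iota τ * stair M k)

section Blocks
variable {M : ℕ}

/-- The "upward" block: `[ins σ 0, ins σ 1, …, ins σ M]`. -/
noncomputable def blockU (σ : Equiv.Perm (Fin M)) : List (Equiv.Perm (Fin (M+1))) :=
  (List.range (M+1)).map (ins σ)

/-- The "downward" block: `[ins σ M, …, ins σ 0]`. -/
noncomputable def blockD (σ : Equiv.Perm (Fin M)) : List (Equiv.Perm (Fin (M+1))) :=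
  (blockU σ).reverse

lemma blockU_ne_nil (σ : Equiv.Perm (Fin M)) : blockU σ ≠ [] := by
  simp [blockU, List.range_succ]

lemma blockD_ne_nil (σ : Equiv.Perm (Fin M)) : blockD σ ≠ [] := by
  simp [blockD, blockU, List.range_succ]

lemma blockU_length (σ : Equiv.Perm (Fin M)) : (blockU σ).length = M + 1 := by
  simp [blockU]

lemma blockD_length (σ : Equiv.Perm (Fin M)) : (blockD σ).length = M + 1 := by
  simp [blockD, blockU]

lemma mem_blockU {σ : Equiv.Perm (Fin M)} {π : Equiv.Perm (Fin (M+1))} :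
    π ∈ blockU σ ↔ ∃ k ≤ M, π = ins σ k := by
  simp only [blockU, List.mem_map, List.mem_range]
  constructor
  · rintro ⟨k, hk, rfl⟩; exact ⟨k, by omega, rfl⟩
  · rintro ⟨k, hk, rfl⟩; exact ⟨k, by omega, rfl⟩

lemma mem_blockD {σ : Equiv.Perm (Fin M)} {π : Equiv.Perm (Fin (M+1))} :
    π ∈ blockD σ ↔ ∃ k ≤ M, π = ins σ k := by
  rw [blockD, List.mem_reverse, mem_blockU]

lemma chain'_blockU (σ : Equiv.Perm (Fin M)) : List.Chain' (rel (M+1)) (blockU σ) := by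
  show List.IsChain _ _; rw [blockU, List.isChain_map, List.isChain_range_succ]
  intro m hm
  exact rel_symm (rel_ins_succ σ m hm)

lemma chain'_blockD (σ : Equiv.Perm (Fin M)) : List.Chain' (rel (M+1)) (blockD σ) := by
  show List.IsChain _ _; rw [blockD, List.isChain_reverse, blockU, List.isChain_map, List.isChain_range_succ]
  intro m hm
  exact rel_ins_succ σ m hm

lemma blockU_head? (σ : Equiv.Perm (Fin M)) : (blockU σ).head? = some (ins σ 0) := by
  rw [blockU, List.range_succ_eq_map]
  simp

lemma blockU_getLast? (σ : Equiv.Perm (Fin M)) : (blockU σ).getLast? = some (ins σ M) := by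
  rw [blockU, List.range_succ]
  simp

lemma blockD_head? (σ : Equiv.Perm (Fin M)) : (blockD σ).head? = some (ins σ M) := by
  rw [blockD, List.head?_reverse, blockU_getLast?]

lemma blockD_getLast? (σ : Equiv.Perm (Fin M)) : (blockD σ).getLast? = some (ins σ 0) := by
  rw [blockD, List.getLast?_reverse, blockU_head?]

lemma nodup_blockU (σ : Equiv.Perm (Fin M)) : (blockU σ).Nodup := by
  refine List.Nodup.map_on ?_ (List.nodup_range)
  intro x hx y hy hxy
  rw [List.mem_range] at hx hy
  exact (ins_inj (σ := σ) (τ := σ) (by omega) (by omega) hxy).2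

lemma nodup_blockD (σ : Equiv.Perm (Fin M)) : (blockD σ).Nodup := by
  rw [blockD, List.nodup_reverse]; exact nodup_blockU σ

lemma blockU_disjoint {σ τ : Equiv.Perm (Fin M)} (h : σ ≠ τ) :
    ∀ π, π ∈ blockU σ → π ∈ blockU τ → False := by
  intro π h1 h2
  obtain ⟨k, hk, rfl⟩ := mem_blockU.mp h1
  obtain ⟨k', hk', he⟩ := mem_blockU.mp h2
  exact h (ins_inj hk hk' he).1

end Blocks

section Big
variable {M : ℕ}

/-- The zig-zag list on `S_{M+1}` built from a list on `S_M`. -/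
noncomputable def big (M : ℕ) : List (Equiv.Perm (Fin M)) → List (Equiv.Perm (Fin (M+1)))
  | σ :: τ :: rest => blockD σ ++ (blockU τ ++ big M rest)
  | _ => []

lemma big_length : ∀ (l : List (Equiv.Perm (Fin M))), Even l.length →
    (big M l).length = l.length * (M + 1)
  | [], _ => by simp [big]
  | [σ], h => by simp at h
  | σ :: τ :: rest, h => by
    have hr : Even rest.length := by simp at h; simpa [Nat.even_add_one, parity_simps] using h
    simp only [big, List.length_append, blockD_length, blockU_length, big_length rest hr,
      List.length_cons]
    ring

lemma mem_big : ∀ (l : List (Equiv.Perm (Fin M))) (π : Equiv.Perm (Fin (M+1))),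
    π ∈ big M l → ∃ σ ∈ l, ∃ k ≤ M, π = ins σ k
  | [], π => by simp [big]
  | [σ], π => by simp [big]
  | σ :: τ :: rest, π => by
    intro h
    simp only [big, List.mem_append] at h
    rcases h with h | h | h
    · obtain ⟨k, hk, rfl⟩ := mem_blockD.mp h
      exact ⟨σ, by simp, k, hk, rfl⟩
    · obtain ⟨k, hk, rfl⟩ := mem_blockU.mp h
      exact ⟨τ, by simp, k, hk, rfl⟩
    · obtain ⟨ρ, hρ, k, hk, rfl⟩ := mem_big rest π h
      exact ⟨ρ, by simp [hρ], k, hk, rfl⟩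

lemma big_head? : ∀ (l : List (Equiv.Perm (Fin M))),
    big M l = [] ∨ ∃ σ rest, l = σ :: rest ∧ (big M l).head? = some (ins σ M)
  | [] => Or.inl rfl
  | [σ] => Or.inl rfl
  | σ :: τ :: rest => by
    refine Or.inr ⟨σ, τ :: rest, rfl, ?_⟩
    rw [big, List.head?_append_of_ne_nil _ (blockD_ne_nil σ), blockD_head?]

lemma big_getLast? : ∀ (l : List (Equiv.Perm (Fin M))), Even l.length →
    l = [] ∨ ∃ τ, l.getLast? = some τ ∧ (big M l).getLast? = some (ins τ M)
  | [], _ => Or.inl rfl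
  | [σ], h => by simp at h
  | σ :: τ :: rest, h => by
    have hr : Even rest.length := by simpa [Nat.even_add_one, parity_simps] using h
    refine Or.inr ?_
    rcases big_getLast? rest hr with rfl | ⟨ρ, hρ1, hρ2⟩
    · refine ⟨τ, by simp, ?_⟩
      rw [big]
      show (blockD σ ++ (blockU τ ++ [])).getLast? = _
      rw [List.append_nil, List.getLast?_append_of_ne_nil _ (blockU_ne_nil τ), blockU_getLast?]
    · have hrne : rest ≠ [] := by rintro rfl; simp at hρ1
      have hbigne : big M rest ≠ [] := by
        intro hc
        have := big_length rest hr
        rw [hc] at this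
        simp only [List.length_nil] at this
        have hpos := List.length_pos_of_ne_nil hrne
        rcases Nat.mul_eq_zero.mp this.symm with h0 | h0 <;> omega
      refine ⟨ρ, ?_, ?_⟩
      · rw [show σ :: τ :: rest = [σ, τ] ++ rest from rfl,
          List.getLast?_append_of_ne_nil _ hrne]
        exact hρ1
      · rw [big, List.getLast?_append_of_ne_nil _ (by simp [hbigne]),
          List.getLast?_append_of_ne_nil _ hbigne, hρ2]

lemma nodup_big : ∀ (l : List (Equiv.Perm (Fin M))), l.Nodup → (big M l).Nodup
  | [], _ => by simp [big]
  | [σ], _ => by simp [big]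
  | σ :: τ :: rest, h => by
    simp only [List.nodup_cons, List.mem_cons] at h
    obtain ⟨hσ, hτ, hrest⟩ := h
    have dj : ∀ (ρ : Equiv.Perm (Fin M)), ρ ∉ rest →
        ∀ π, π ∈ blockU ρ → π ∈ big M rest → False := by
      intro ρ hρ π h1 h2
      obtain ⟨ρ', hρ', k', hk', rfl⟩ := mem_big rest π h2
      obtain ⟨k, hk, he⟩ := mem_blockU.mp h1
      have := (ins_inj hk' hk he).1
      exact hρ (this ▸ hρ')
    rw [big]
    refine List.Nodup.append (nodup_blockD σ) (List.Nodup.append (nodup_blockU τ)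
      (nodup_big rest hrest) ?_) ?_
    · intro π h1 h2
      exact dj τ hτ π h1 h2
    · intro π h1 h2
      rw [blockD, List.mem_reverse] at h1
      rw [List.mem_append] at h2
      rcases h2 with h2 | h2
      · exact blockU_disjoint (fun he => hσ (Or.inl he)) π h1 h2
      · exact dj σ (fun hc => hσ (Or.inr hc)) π h1 h2

lemma chain'_big : ∀ (l : List (Equiv.Perm (Fin M))), List.Chain' (rel M) l →
    List.Chain' (rel (M+1)) (big M l)
  | [], _ => by simp [big]; exact List.IsChain.nil
  | [σ], _ => by simp [big]; exact List.IsChain.nil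
  | σ :: τ :: rest, h => by
    replace h := List.isChain_cons_cons.mp h
    obtain ⟨hστ, h2⟩ := h
    rw [big]; show List.IsChain _ _; rw [List.isChain_append, List.isChain_append]
    refine ⟨chain'_blockD σ, ⟨chain'_blockU τ, chain'_big _ h2.tail, ?_⟩, ?_⟩
    · -- junction blockU τ → big rest
      intro x hx y hy
      rw [blockU_getLast?, Option.mem_def, Option.some_inj] at hx
      subst hx
      rcases big_head? rest with hnil | ⟨ρ, rest', hrest, hh⟩
      · rw [hnil] at hy; simp at hy
      · rw [hh, Option.mem_def, Option.some_inj] at hy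
        subst hy
        have hτρ : rel M τ ρ := by
          subst hrest
          exact (List.isChain_cons_cons.mp h2).1
        exact rel_ins_top hτρ
    · -- junction blockD σ → blockU τ ++ big rest
      intro x hx y hy
      rw [blockD_getLast?, Option.mem_def, Option.some_inj] at hx
      subst hx
      rw [List.head?_append_of_ne_nil _ (blockU_ne_nil τ), blockU_head?,
        Option.mem_def, Option.some_inj] at hy
      subst hy
      exact rel_ins_zero hστ

end Big

lemma exists_cyclic : ∀ M : ℕ, 2 ≤ M → ∃ l : List (Equiv.Perm (Fin M)),
    l.Nodup ∧ l.length = M.factorial ∧ Even l.length ∧ List.Chain' (rel M) l ∧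
    ∀ a b, l.head? = some a → l.getLast? = some b → rel M b a := by
  intro M hM
  induction M, hM using Nat.le_induction with
  | base =>
    refine ⟨[1, sw 2 0 (by omega)], ?_, by decide, by decide, ?_, ?_⟩
    · simp only [List.nodup_cons, List.mem_singleton, List.not_mem_nil, not_false_iff,
        List.nodup_nil, and_true]
      exact fun h => sw_ne_one 2 0 (by omega) h.symm
    · refine List.isChain_cons_cons.mpr ⟨⟨0, by omega, (one_mul _).symm⟩, List.IsChain.singleton _⟩
    · intro a b ha hb
      simp only [List.head?_cons, Option.some_inj] at ha
      have hb' : b = sw 2 0 (by omega) := by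
        have := hb
        simp only [List.getLast?_cons_cons, List.getLast?_singleton, Option.some_inj] at this
        exact this.symm
      subst ha; subst hb'
      refine ⟨0, by omega, ?_⟩
      rw [sw, Equiv.swap_mul_self]
  | succ M hM ih =>
    obtain ⟨l, hnd, hlen, heven, hch, hwrap⟩ := ih
    have hlpos : l ≠ [] := by
      intro hc
      rw [hc] at hlen
      exact absurd hlen.symm (Nat.factorial_pos M).ne'
    refine ⟨big M l, nodup_big l hnd, ?_, ?_, chain'_big l hch, ?_⟩
    · rw [big_length l heven, hlen, Nat.factorial_succ, Nat.mul_comm]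
    · rw [big_length l heven]
      exact heven.mul_right _
    · intro a b ha hb
      rcases big_head? l with hnil | ⟨σ, rest, hrest, hh⟩
      · rw [hnil] at ha; simp at ha
      rcases big_getLast? l heven with h0 | ⟨τ, hτ1, hτ2⟩
      · exact absurd h0 hlpos
      rw [hh, Option.some_inj] at ha
      rw [hτ2, Option.some_inj] at hb
      subst ha; subst hb
      refine rel_ins_top (hwrap σ τ ?_ hτ1)
      rw [hrest]; rfl

end Stair
end Perms

section Final

lemma rel_adj {n : ℕ} {σ τ : Equiv.Perm (Fin n)} (h : rel n σ τ) :
    (adjTransGraph n).Adj σ τ := by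
  rw [adjTransGraph, SimpleGraph.fromRel_adj]
  refine ⟨rel_ne h, Or.inl ?_⟩
  obtain ⟨i, hi, e⟩ := h
  exact ⟨i, hi, e⟩

lemma chain_close {α : Type*} {R : α → α → Prop} {y : α} : ∀ (x : α) (xs : List α),
    List.Chain' R (x :: xs) → R ((x :: xs).getLast (by simp)) y →
    List.Chain R x (xs ++ [y])
  | x, [], _, hr => List.chain_cons.mpr ⟨hr, List.Chain.nil⟩
  | x, z :: xs, hch, hr => by
    replace hch := List.isChain_cons_cons.mp hch
    refine List.chain_cons.mpr ⟨hch.1, chain_close z xs hch.2 ?_⟩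
    rwa [List.getLast_cons (by simp)] at hr

/-- The adjacent-transposition graph on `S_n` contains a Hamiltonian cycle for all
`n ≥ 3` (the Steinhaus–Johnson–Trotter theorem). -/
theorem stmt3 (n : ℕ) (hn : 3 ≤ n) : HasHamCycle (adjTransGraph n) := by
  classical
  obtain ⟨l, hnd, hlen, heven, hch, hwrap⟩ := exists_cyclic n (by omega)
  have hlen3 : 3 ≤ l.length := by
    rw [hlen]
    exact le_trans hn (Nat.self_le_factorial n)
  rcases l with _ | ⟨a, _ | ⟨c, _ | ⟨d, t⟩⟩⟩
  · simp at hlen3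
  · simp at hlen3
  · simp at hlen3
  have hmem : ∀ v : Equiv.Perm (Fin n), v ∈ a :: c :: d :: t := by
    intro v
    have h1 : (a :: c :: d :: t).toFinset = Finset.univ := by
      apply Finset.eq_univ_of_card
      rw [List.toFinset_card_of_nodup hnd, hlen, Fintype.card_perm, Fintype.card_fin]
    rw [← List.mem_toFinset, h1]
    exact Finset.mem_univ v
  have hch' : List.Chain' (adjTransGraph n).Adj (a :: c :: d :: t) :=
    hch.imp (fun _ _ h => rel_adj h)
  have hlast := List.getLast?_eq_getLast_of_ne_nil
    (l := a :: c :: d :: t) (by simp)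
  have hAdjLast : (adjTransGraph n).Adj ((a :: c :: d :: t).getLast (by simp)) a :=
    rel_adj (hwrap a _ rfl hlast)
  exact hasHamCycle_of_list a c d t hnd hmem
    (chain_close a (c :: d :: t) hch' hAdjLast)

end Final
end

section
/- Every tree T with at least 2 vertices has its edges orderable so that contracting Hamiltonian-cycle-equipped vertex classes along a spanning tree glues to a global Hamiltonian cycle: formally, if a graph G has its vertices partitioned into classes C_v indexed by vertices v of a tree T, each G[C_v] has a Hamiltonian cycle, and for each tree edge uv of T there is a 4-cycle of G using one edge of the chosen Hamiltonian cycle of G[C_u], one edge of the chosen Hamiltonian cycle of G[C_v], and two edges between C_u and C_v, with all these 4-cycles pairwise edge-disjoint from each other's Hamiltonian-cycle edges, then G has a Hamiltonian cycle. -/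
open SimpleGraph

namespace Stmt19Aux

variable {α : Type*} [DecidableEq α] {G : SimpleGraph α}

lemma start_mem_support_tail {x : α} (c : G.Walk x x) (hc : c ≠ Walk.nil) :
    x ∈ c.support.tail := by
  cases c with
  | nil => exact absurd rfl hc
  | cons h q => simpa using q.end_mem_support

lemma mem_support_iff_tail {x : α} (c : G.Walk x x) (hc : c ≠ Walk.nil) (y : α) :
    y ∈ c.support ↔ y ∈ c.support.tail := by
  constructor
  · intro h
    rw [c.support_eq_cons, List.mem_cons] at h
    rcases h with rfl | h
    · exact start_mem_support_tail c hc
    · exact h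
  · exact List.mem_of_mem_tail

lemma tail_perm_reverse {x : α} (c : G.Walk x x) :
    c.reverse.support.tail.Perm c.support.tail := by
  have h1 : c.reverse.support.Perm c.support := by
    rw [Walk.support_reverse]; exact List.reverse_perm _
  rw [c.reverse.support_eq_cons, c.support_eq_cons] at h1
  exact h1.cons_inv

lemma IsCycle.rev {x : α} {c : G.Walk x x} (hc : c.IsCycle) : c.reverse.IsCycle := by
  rw [Walk.isCycle_def] at hc ⊢
  refine ⟨Walk.IsTrail.reverse _ hc.1, ?_, ?_⟩
  · intro h
    apply hc.2.1
    have := congrArg Walk.reverse h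
    simpa using this
  · exact ((tail_perm_reverse c).nodup_iff).2 hc.2.2

lemma edge_start {z y b : α} (q : G.Walk z y) (hq : q.IsPath) (hb : s(z, b) ∈ q.edges) :
    ∃ (h : G.Adj z b) (r : G.Walk b y), q = Walk.cons h r := by
  cases q with
  | nil => simp at hb
  | @cons _ w _ h r =>
    rw [Walk.cons_isPath_iff] at hq
    rw [Walk.edges_cons, List.mem_cons] at hb
    rcases hb with hb | hb
    · have hbw : b = w := by
        rcases Sym2.eq_iff.1 hb with ⟨-, rfl⟩ | ⟨rfl, -⟩
        · rfl
        · exact absurd r.start_mem_support hq.2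
      subst hbw
      exact ⟨h, r, rfl⟩
    · exact absurd (r.fst_mem_support_of_mem_edges hb) hq.2

lemma cycle_cut_start {a b : α} {c : G.Walk a a} (hc : c.IsCycle) (he : s(a, b) ∈ c.edges) :
    ∃ (h : G.Adj a b) (p : G.Walk b a), c = Walk.cons h p ∨ c.reverse = Walk.cons h p := by
  cases c with
  | nil => simp at he
  | @cons _ w _ h₀ q =>
    rw [Walk.cons_isCycle_iff] at hc
    rw [Walk.edges_cons, List.mem_cons] at he
    rcases he with he | he
    · have hbw : b = w := by
        rcases Sym2.eq_iff.1 he with ⟨-, rfl⟩ | ⟨rfl, -⟩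
        · rfl
        · exact absurd h₀ (G.irrefl)
      subst hbw
      exact ⟨h₀, q, Or.inl rfl⟩
    · have hb' : s(a, b) ∈ q.reverse.edges := by
        rw [Walk.edges_reverse, List.mem_reverse]; exact he
      obtain ⟨hab, r, hqr⟩ := edge_start q.reverse hc.1.reverse hb'
      refine ⟨hab, r.append (Walk.cons h₀.symm Walk.nil), Or.inr ?_⟩
      rw [Walk.reverse_cons, hqr, Walk.cons_append]

lemma cycle_cut {x a b : α} {c : G.Walk x x} (hc : c.IsCycle) (he : s(a, b) ∈ c.edges) :
    ∃ p : G.Walk b a, p.IsPath ∧ s(a, b) ∉ p.edges ∧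
      (∀ y, y ∈ p.support ↔ y ∈ c.support) ∧
      (∀ e, e ∈ c.edges ↔ e = s(a, b) ∨ e ∈ p.edges) := by
  have ha : a ∈ c.support := c.fst_mem_support_of_mem_edges he
  have hc₁ : (c.rotate a ha).IsCycle := hc.rotate ha
  have he₁ : s(a, b) ∈ (c.rotate a ha).edges := ((c.rotate_edges a ha).perm.mem_iff).2 he
  have hsup : ∀ y, (y ∈ (c.rotate a ha).support ↔ y ∈ c.support) := by
    intro y
    rw [mem_support_iff_tail _ hc₁.ne_nil, mem_support_iff_tail _ hc.ne_nil]
    exact (c.support_rotate a ha).perm.mem_iff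
  have hedge : ∀ e, e ∈ (c.rotate a ha).edges ↔ e ∈ c.edges := fun e =>
    (c.rotate_edges a ha).perm.mem_iff
  obtain ⟨hab, p, hcase⟩ := cycle_cut_start hc₁ he₁
  have main : ∀ (d : G.Walk a a), d.IsCycle →
      (∀ y, y ∈ d.support ↔ y ∈ c.support) → (∀ e, e ∈ d.edges ↔ e ∈ c.edges) →
      d = Walk.cons hab p →
      ∃ p : G.Walk b a, p.IsPath ∧ s(a, b) ∉ p.edges ∧
        (∀ y, y ∈ p.support ↔ y ∈ c.support) ∧
        (∀ e, e ∈ c.edges ↔ e = s(a, b) ∨ e ∈ p.edges) := by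
    intro d hd hds hde hdeq
    rw [hdeq] at hd hds hde
    rw [Walk.cons_isCycle_iff] at hd
    refine ⟨p, hd.1, hd.2, ?_, ?_⟩
    · intro y
      rw [← hds y, Walk.support_cons, List.mem_cons]
      constructor
      · exact Or.inr
      · rintro (rfl | h)
        · exact p.end_mem_support
        · exact h
    · intro e
      rw [← hde e, Walk.edges_cons, List.mem_cons]
  rcases hcase with h | h
  · exact main _ hc₁ hsup hedge h
  · refine main _ (IsCycle.rev hc₁) (fun y => ?_) (fun e => ?_) h
    · rw [Walk.support_reverse, List.mem_reverse]; exact hsup y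
    · rw [Walk.edges_reverse, List.mem_reverse]; exact hedge e

lemma cycle_glue {a b c d : α} (p : G.Walk b a) (q : G.Walk d c)
    (hp : p.IsPath) (hq : q.IsPath) (hab : a ≠ b) (hcd : c ≠ d)
    (hdisj : ∀ y, y ∈ p.support → y ∉ q.support)
    (h1 : G.Adj a d) (h2 : G.Adj c b) :
    ∃ w : G.Walk b b, w.IsCycle ∧
      (∀ y, y ∈ w.support ↔ (y ∈ p.support ∨ y ∈ q.support)) ∧
      (∀ e, e ∈ p.edges ∨ e ∈ q.edges → e ∈ w.edges) := by
  have hbp : b ∈ p.support := p.start_mem_support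
  have hap : a ∈ p.support := p.end_mem_support
  have hdq : d ∈ q.support := q.start_mem_support
  have hcq : c ∈ q.support := q.end_mem_support
  have hsup : (p.append (Walk.cons h1 (q.append (Walk.cons h2 Walk.nil)))).support
      = p.support ++ (q.support ++ [b]) := by
    simp [Walk.support_append]
  have hedges : (p.append (Walk.cons h1 (q.append (Walk.cons h2 Walk.nil)))).edges
      = p.edges ++ s(a, d) :: (q.edges ++ [s(c, b)]) := by
    simp [Walk.edges_append]
  have hpq_edges : ∀ e ∈ p.edges, e ∉ q.edges := by
    intro e
    induction e with
    | h u v =>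
      intro hep heq
      exact hdisj u (p.fst_mem_support_of_mem_edges hep) (q.fst_mem_support_of_mem_edges heq)
  have had_p : s(a, d) ∉ p.edges := fun h => hdisj d (p.snd_mem_support_of_mem_edges h) hdq
  have had_q : s(a, d) ∉ q.edges := fun h => hdisj a hap (q.fst_mem_support_of_mem_edges h)
  have hcb_p : s(c, b) ∉ p.edges := fun h => hdisj c (p.fst_mem_support_of_mem_edges h) hcq
  have hcb_q : s(c, b) ∉ q.edges := fun h => hdisj b hbp (q.snd_mem_support_of_mem_edges h)
  have hne : s(a, d) ≠ s(c, b) := by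
    intro h
    rcases Sym2.eq_iff.1 h with ⟨rfl, rfl⟩ | ⟨rfl, rfl⟩
    · exact hdisj a hap hcq
    · exact hab rfl
  refine ⟨p.append (Walk.cons h1 (q.append (Walk.cons h2 Walk.nil))), ?_, ?_, ?_⟩
  · rw [Walk.isCycle_def]
    refine ⟨⟨?_⟩, ?_, ?_⟩
    · rw [hedges, List.nodup_append]
      refine ⟨hp.isTrail.edges_nodup, ?_, ?_⟩
      · rw [List.nodup_cons, List.nodup_append]
        refine ⟨?_, hq.isTrail.edges_nodup, by simp, ?_⟩
        · simp only [List.mem_append, List.mem_singleton]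
          rintro (h | h)
          · exact had_q h
          · exact hne h
        · intro e he
          simp only [List.mem_singleton, forall_eq]
          intro h; subst h; exact hcb_q he
      · intro e hep e' he' hee
        subst hee
        simp only [List.mem_cons, List.mem_append, List.mem_singleton] at he'
        rcases he' with (rfl | h | rfl | h)
        · exact had_p hep
        · exact hpq_edges e hep h
        · exact hcb_p hep
        · simp at h
    · intro hnil
      have : s(c, b) ∈ (p.append (Walk.cons h1 (q.append (Walk.cons h2 Walk.nil)))).edges := by
        rw [hedges]; simp
      rw [hnil] at this
      simp at this
    · have htail : (p.append (Walk.cons h1 (q.append (Walk.cons h2 Walk.nil)))).support.tail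
          = p.support.tail ++ (q.support ++ [b]) := by
        rw [hsup, p.support_eq_cons]; rfl
      rw [htail, List.nodup_append]
      have hpn := hp.support_nodup
      rw [p.support_eq_cons, List.nodup_cons] at hpn
      refine ⟨hpn.2, ?_, ?_⟩
      · rw [List.nodup_append]
        refine ⟨hq.support_nodup, by simp, ?_⟩
        intro y hy
        simp only [List.mem_singleton, forall_eq]
        rintro rfl
        exact hdisj y hbp hy
      · intro y hy z hz hyz
        subst hyz
        simp only [List.mem_append, List.mem_singleton] at hz
        rcases hz with (h | rfl)
        · exact hdisj y (List.mem_of_mem_tail hy) h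
        · exact hpn.1 hy
  · intro y
    rw [hsup]
    simp only [List.mem_append, List.mem_singleton]
    constructor
    · rintro (h | h | rfl)
      · exact Or.inl h
      · exact Or.inr h
      · exact Or.inl hbp
    · rintro (h | h)
      · exact Or.inl h
      · exact Or.inr (Or.inl h)
  · intro e he
    rw [hedges]
    simp only [List.mem_append, List.mem_cons, List.mem_singleton]
    rcases he with h | h
    · exact Or.inl h
    · exact Or.inr (Or.inr (Or.inl h))

end Stmt19Aux


/-- Gluing Hamiltonian cycles along a spanning tree: suppose the vertices of `G`
are partitioned into classes `C v` indexed by the vertices of a tree `T`, each of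
size at least 3, each induced subgraph `G[C v]` carries a fixed Hamiltonian cycle
`H v`, and for each tree edge `uv` there is a quadrilateral (4-cycle) of `G` using
one edge `{qa, qb}` of `H u`, one edge `{qc, qd}` of `H v`, and two crossing edges
`qb–qc`, `qd–qa` of `G`; the quadrilaterals are chosen consistently for the two
orientations of a tree edge, and for distinct tree edges incident to a common
vertex `u` the chosen edges of `H u` are distinct. Then `G` has a Hamiltonian
cycle. -/
theorem stmt19 {V W : Type*} [Fintype V] [DecidableEq V] [Fintype W] [DecidableEq W]
    (G : SimpleGraph V) (T : SimpleGraph W) (hT : T.IsTree)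
    (C : W → Set V)
    (hdisj : ∀ u v : W, u ≠ v → Disjoint (C u) (C v))
    (hcover : (⋃ w : W, C w) = Set.univ)
    (hcard : ∀ w : W, 3 ≤ Nat.card (C w))
    (r : ∀ w : W, C w)
    (H : ∀ w : W, (G.induce (C w)).Walk (r w) (r w))
    (hH : ∀ w : W, (H w).IsHamiltonianCycle)
    (qa qb : ∀ u v : W, T.Adj u v → C u)
    (qc qd : ∀ u v : W, T.Adj u v → C v)
    (hqu : ∀ (u v : W) (h : T.Adj u v), s(qa u v h, qb u v h) ∈ (H u).edges)
    (hqv : ∀ (u v : W) (h : T.Adj u v), s(qc u v h, qd u v h) ∈ (H v).edges)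
    (hf₁ : ∀ (u v : W) (h : T.Adj u v), G.Adj (qb u v h) (qc u v h))
    (hf₂ : ∀ (u v : W) (h : T.Adj u v), G.Adj (qd u v h) (qa u v h))
    (hsymm : ∀ (u v : W) (h : T.Adj u v),
      s(qc u v h, qd u v h) = s(qa v u h.symm, qb v u h.symm))
    (hdisjq : ∀ (u v v' : W) (h : T.Adj u v) (h' : T.Adj u v'), v ≠ v' →
      s(qa u v h, qb u v h) ≠ s(qa u v' h', qb u v' h')) :
    HasHamCycle G := by
  classical
  open SimpleGraph Stmt19Aux in
  -- the Hamiltonian cycles mapped into `G`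
  let Hw : ∀ w : W, G.Walk ((r w : V)) (r w) := fun w =>
    (H w).map (SimpleGraph.Embedding.induce (C w)).toHom
  have hinj : ∀ w : W, Function.Injective ((SimpleGraph.Embedding.induce (C w) :
      G.induce (C w) ↪g G).toHom) := fun w => Subtype.val_injective
  have hHcyc : ∀ w, (Hw w).IsCycle := fun w =>
    (SimpleGraph.Walk.map_isCycle_iff_of_injective (hinj w)).2 (hH w).isCycle
  have hHsup : ∀ (w : W) (y : V), y ∈ (Hw w).support ↔ y ∈ C w := by
    intro w y
    rw [show (Hw w).support = (H w).support.map (SimpleGraph.Embedding.induce (C w)).toHom from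
      Walk.support_map _ _, List.mem_map]
    constructor
    · rintro ⟨z, _, rfl⟩
      exact z.2
    · intro hy
      exact ⟨⟨y, hy⟩, (hH w).mem_support _, rfl⟩
  have hHedge : ∀ (w : W) (x y : C w), s(x, y) ∈ (H w).edges →
      s((x : V), (y : V)) ∈ (Hw w).edges := by
    intro w x y h
    rw [show (Hw w).edges = (H w).edges.map (Sym2.map (SimpleGraph.Embedding.induce (C w)).toHom) from
      Walk.edges_map _ _]
    exact List.mem_map_of_mem h
  -- the invariant
  let Inv : Finset W → Prop := fun S =>
    ∃ (x : V) (c : G.Walk x x), c.IsCycle ∧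
      (∀ y : V, y ∈ c.support ↔ ∃ w ∈ S, y ∈ C w) ∧
      (∀ (u v : W) (h : T.Adj u v), u ∈ S → v ∉ S →
        s(((qa u v h : V)), ((qb u v h : V))) ∈ c.edges)
  -- coercion injectivity on Sym2
  have symInj : ∀ (w : W) (x y x' y' : C w),
      s((x : V), (y : V)) = s((x' : V), (y' : V)) → s(x, y) = s(x', y') := by
    intro w x y x' y' h
    apply Sym2.map.injective (Subtype.val_injective : Function.Injective ((↑) : C w → V))
    rwa [Sym2.map_pair_eq, Sym2.map_pair_eq]
  -- the extension step
  have extend : ∀ (S : Finset W) (u v : W) (huv : T.Adj u v), u ∈ S → v ∉ S →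
      Inv S → Inv (insert v S) := by
    rintro S u v huv hu hv ⟨x, c, hcyc, hsup, hedg⟩
    have he₁ : s(((qa u v huv : V)), ((qb u v huv : V))) ∈ c.edges := hedg u v huv hu hv
    obtain ⟨p, hp, hpne, hpsup, hpedge⟩ := cycle_cut hcyc he₁
    have he₂ : s(((qc u v huv : V)), ((qd u v huv : V))) ∈ (Hw v).edges :=
      hHedge v _ _ (hqv u v huv)
    obtain ⟨q, hq, hqne, hqsup, hqedge⟩ := cycle_cut (hHcyc v) he₂
    have hdisjpq : ∀ y, y ∈ p.support → y ∉ q.support := by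
      intro y hyp hyq
      rw [hpsup y, hsup y] at hyp
      rw [hqsup y, hHsup v y] at hyq
      obtain ⟨w, hw, hyw⟩ := hyp
      have hwv : w ≠ v := fun h => hv (h ▸ hw)
      exact Set.disjoint_left.1 (hdisj w v hwv) hyw hyq
    have hab : (qa u v huv : V) ≠ (qb u v huv : V) := (c.adj_of_mem_edges he₁).ne
    have hcd : (qc u v huv : V) ≠ (qd u v huv : V) := ((Hw v).adj_of_mem_edges he₂).ne
    obtain ⟨wnew, hwc, hwsup, hwedge⟩ := cycle_glue p q hp hq hab hcd hdisjpq
      (hf₂ u v huv).symm (hf₁ u v huv).symm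
    refine ⟨_, wnew, hwc, ?_, ?_⟩
    · intro y
      rw [hwsup y]
      constructor
      · rintro (hyp | hyq)
        · rw [hpsup y, hsup y] at hyp
          obtain ⟨w, hw, hyw⟩ := hyp
          exact ⟨w, Finset.mem_insert_of_mem hw, hyw⟩
        · rw [hqsup y, hHsup v y] at hyq
          exact ⟨v, Finset.mem_insert_self _ _, hyq⟩
      · rintro ⟨w, hw, hyw⟩
        rcases Finset.mem_insert.1 hw with rfl | hw
        · right
          rw [hqsup y, hHsup w y]
          exact hyw
        · left
          rw [hpsup y, hsup y]
          exact ⟨w, hw, hyw⟩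
    · intro u' v' h' hu' hv'
      have hv'S : v' ∉ S := fun hh => hv' (Finset.mem_insert_of_mem hh)
      rcases Finset.mem_insert.1 hu' with rfl | hu'S
      · -- u' = v : the needed edge comes from q
        apply hwedge
        right
        have hmem : s(((qa u' v' h' : V)), ((qb u' v' h' : V))) ∈ (Hw u').edges :=
          hHedge u' _ _ (hqu u' v' h')
        rw [hqedge] at hmem
        rcases hmem with hmem | hmem
        · exfalso
          have hvu : v' ≠ u := fun h => hv'S (h ▸ hu)
          have hcoe : s(((qc u u' huv : V)), ((qd u u' huv : V)))
              = s(((qa u' u huv.symm : V)), ((qb u' u huv.symm : V))) := by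
            have := congrArg (Sym2.map (Subtype.val : C u' → V)) (hsymm u u' huv)
            simpa [Sym2.map_pair_eq] using this
          exact hdisjq u' v' u h' huv.symm hvu (symInj u' _ _ _ _ (hmem.trans hcoe))
        · exact hmem
      · -- u' ∈ S : the needed edge comes from p
        apply hwedge
        left
        have hmem := hedg u' v' h' hu'S hv'S
        rw [hpedge] at hmem
        rcases hmem with hmem | hmem
        · exfalso
          by_cases hque : u' = u
          · subst hque
            have hvv : v' ≠ v := fun h => hv' (h ▸ Finset.mem_insert_self v S)
            exact hdisjq u' v' v h' huv hvv (symInj u' _ _ _ _ hmem)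
          · rcases Sym2.eq_iff.1 hmem with ⟨h₁, -⟩ | ⟨h₁, -⟩
            · exact Set.disjoint_left.1 (hdisj u' u hque) (qa u' v' h').2
                (h₁ ▸ (qa u v huv).2)
            · exact Set.disjoint_left.1 (hdisj u' u hque) (qa u' v' h').2
                (h₁ ▸ (qb u v huv).2)
        · exact hmem
  -- base case
  obtain ⟨w₀⟩ : Nonempty W := hT.isConnected.nonempty
  have base : Inv {w₀} := by
    refine ⟨(r w₀ : V), Hw w₀, hHcyc w₀, ?_, ?_⟩
    · intro y
      rw [hHsup w₀ y]
      simp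
    · intro u v h hu hv
      rw [Finset.mem_singleton] at hu
      subst hu
      exact hHedge u _ _ (hqu u v h)
  -- frontier lemma
  have frontier : ∀ (S : Finset W) {y x : W} (p : T.Walk y x), y ∈ S → x ∉ S →
      ∃ u ∈ S, ∃ v, v ∉ S ∧ T.Adj u v := by
    intro S y x p
    induction p with
    | nil => intro h1 h2; exact absurd h1 h2
    | @cons y' w' x' h p ih =>
      intro h1 h2
      by_cases hm : w' ∈ S
      · exact ih hm h2
      · exact ⟨y', h1, w', hm, h⟩
  -- growing the invariant to the whole tree
  have grow : ∀ (k : ℕ) (S : Finset W), S.Nonempty → Inv S →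
      Fintype.card W ≤ S.card + k → Inv Finset.univ := by
    intro k
    induction k with
    | zero =>
      intro S hne hinv hcard'
      have hS : S = Finset.univ :=
        Finset.eq_univ_of_card S (le_antisymm (by simpa using S.card_le_univ) (by simpa using hcard'))
      exact hS ▸ hinv
    | succ k ih =>
      intro S hne hinv hcard'
      by_cases hS : S = Finset.univ
      · exact hS ▸ hinv
      · obtain ⟨x, hx⟩ : ∃ x, x ∉ S := by
          by_contra hcon
          push_neg at hcon
          exact hS (Finset.eq_univ_iff_forall.2 hcon)
        obtain ⟨y, hy⟩ := hne
        obtain ⟨pw⟩ : T.Reachable y x := hT.isConnected.preconnected y x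
        obtain ⟨u, hu, v, hv, huv⟩ := frontier S pw hy hx
        refine ih (insert v S) ⟨v, Finset.mem_insert_self _ _⟩
          (extend S u v huv hu hv hinv) ?_
        rw [Finset.card_insert_of_notMem hv]
        omega
  obtain ⟨x, c, hcyc, hsup, -⟩ := grow (Fintype.card W) {w₀}
    ⟨w₀, Finset.mem_singleton_self w₀⟩ base (by simp)
  refine ⟨x, c, hcyc, ?_⟩
  intro y
  rw [SimpleGraph.Walk.support_tail_of_not_nil c hcyc.not_nil]
  apply List.count_eq_one_of_mem
  · rw [SimpleGraph.Walk.isCycle_def] at hcyc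
    exact hcyc.2.2
  · rw [← mem_support_iff_tail c hcyc.ne_nil, hsup y]
    have hy : y ∈ ⋃ w : W, C w := by rw [hcover]; trivial
    obtain ⟨w, hw⟩ := Set.mem_iUnion.1 hy
    exact ⟨w, Finset.mem_univ w, hw⟩
end
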